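/- arXiv:2509.24612 — 2 statements merged into one kernel-verified Lean document; each statement's English description precedes it below -/
import Mathlib

section
/- Fix a real k > −1 and let F_k(r) := r·J_k(r)/J_{k+1}(r). For every r > 0 with J_{k+1}(r) ≠ 0, the derivative of F_k at r satisfies F_k'(r) < −r/(k+2). -/
/-!
Write `J_a(r) = (r/2)^a f_a((r/2)^2)` with the entire function
`f_a(x) = ∑ (-x)^m / (m! Γ(m+a+1))`, which satisfies `f_a' = -f_{a+1}` and
`f_a = (a+1) f_{a+1} - x f_{a+2}`. Then `F_k'(r) = r (f_k f_{k+2} - f_{k+1}^2) / f_{k+1}^2` at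
`x = (r/2)^2`, so the claim is the Turán-type inequality `(k+2) f_k f_{k+2} < (k+1) f_{k+1}^2`.
By the recurrence this reduces to positivity, for `x > 0`, of
`P = f_{k+1}^2 - (k+2) f_{k+1} f_{k+2} + x f_{k+2}^2`, which holds because `x^(k+2) P` vanishes
at `0` and has derivative `x^(k+2) f_{k+2}^2`.
-/

open Real

/-- Bessel function of the first kind of real order `k`, defined by its power series
(valid for `r > 0`, using real powers). -/
noncomputable def besselJ (k r : ℝ) : ℝ :=
  ∑' m : ℕ, ((-1 : ℝ) ^ m / (m.factorial * Real.Gamma (m + k + 1))) * (r / 2) ^ ((2 * m : ℝ) + k)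

open Filter Topology Set

noncomputable section

def besselCoeff (a : ℝ) (m : ℕ) : ℝ :=
  (-1 : ℝ) ^ m / (m.factorial * Gamma (m + a + 1))

def besselSeries (a x : ℝ) : ℝ :=
  ∑' m : ℕ, besselCoeff a m * x ^ m

lemma besselCoeff_succ_mul (a : ℝ) (m : ℕ) :
    besselCoeff a (m + 1) * (m + 1) = -besselCoeff (a + 1) m := by
  have hm : (m : ℝ) + 1 ≠ 0 := by positivity
  simp only [besselCoeff, Nat.factorial_succ, Nat.cast_mul, Nat.cast_succ, pow_succ]
  rw [show (m : ℝ) + 1 + a + 1 = m + (a + 1) + 1 by ring]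
  field_simp

lemma besselCoeff_eq_mul_besselCoeff_add_one (a : ℝ) (m : ℕ) :
    besselCoeff a m = (m + a + 1) * besselCoeff (a + 1) m := by
  rcases eq_or_ne ((m : ℝ) + a + 1) 0 with h | h
  -- both sides vanish, `Gamma 0 = 0` being Mathlib's junk value at the pole
  · simp [besselCoeff, h]
  · rw [besselCoeff, besselCoeff, show (m : ℝ) + (a + 1) + 1 = m + a + 1 + 1 by ring,
      Gamma_add_one h]
    field_simp

lemma besselCoeff_recurrence (a : ℝ) (m : ℕ) :
    besselCoeff a (m + 1) = (a + 1) * besselCoeff (a + 1) (m + 1) - besselCoeff (a + 2) m := by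
  rw [besselCoeff_eq_mul_besselCoeff_add_one, show a + 2 = a + 1 + 1 by ring,
    sub_eq_add_neg, ← besselCoeff_succ_mul]
  push_cast
  ring

lemma abs_besselCoeff_le (a : ℝ) (ha : -1 < a) {m : ℕ} (hm : 2 ≤ m) :
    |besselCoeff a m| ≤ 1 / m.factorial := by
  have hΓ : 1 ≤ Gamma (m + a + 1) := by
    have h2 : (2 : ℝ) ≤ m := by exact_mod_cast hm
    calc 1 = Gamma 2 := Gamma_two.symm
      _ ≤ Gamma (m + a + 1) :=
        Gamma_strictMonoOn_Ici.monotoneOn (by simp) (by simp; linarith) (by linarith)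
  have hf : (0 : ℝ) < m.factorial := by positivity
  rw [besselCoeff, abs_div, abs_pow, abs_neg, abs_one, one_pow,
    abs_of_pos (by positivity)]
  gcongr
  exact le_mul_of_one_le_right hf.le hΓ

lemma summable_succ_mul_abs_besselCoeff_mul_pow (a : ℝ) (ha : -1 < a) (R : ℝ) :
    Summable fun m : ℕ => (m + 1) * |besselCoeff a m| * R ^ m := by
  refine .of_norm_bounded_eventually_nat (Real.summable_pow_div_factorial (2 * |R|)) ?_
  filter_upwards [eventually_ge_atTop 2] with m hm
  have h2m : (m : ℝ) + 1 ≤ 2 ^ m := by exact_mod_cast Nat.lt_two_pow_self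
  rw [norm_mul, norm_mul, Real.norm_eq_abs, Real.norm_eq_abs, Real.norm_eq_abs, abs_abs,
    abs_of_pos (by positivity), abs_pow, mul_pow, mul_div_right_comm, ← mul_one_div]
  gcongr
  exact abs_besselCoeff_le a ha hm

lemma summable_besselCoeff_mul_pow (a : ℝ) (ha : -1 < a) (x : ℝ) :
    Summable fun m : ℕ => besselCoeff a m * x ^ m := by
  refine .of_norm_bounded (summable_succ_mul_abs_besselCoeff_mul_pow a ha |x|) fun m => ?_
  rw [norm_mul, norm_pow, Real.norm_eq_abs, Real.norm_eq_abs]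
  have hle : |besselCoeff a m| ≤ (m + 1) * |besselCoeff a m| :=
    le_mul_of_one_le_left (abs_nonneg _) (by simp)
  gcongr

lemma hasDerivAt_besselSeries (a : ℝ) (ha : -1 < a) (x : ℝ) :
    HasDerivAt (besselSeries a) (-besselSeries (a + 1) x) x := by
  set R := |x| + 1
  have hR : 1 ≤ R := by simp [R]
  have hxR : x ∈ Metric.ball (0 : ℝ) R := by simp [R]
  have hbound : ∀ (m : ℕ), ∀ y ∈ Metric.ball (0 : ℝ) R,
      ‖besselCoeff a m * (m * y ^ (m - 1))‖ ≤ (m + 1) * |besselCoeff a m| * R ^ m := by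
    intro m y hy
    rw [mem_ball_zero_iff, Real.norm_eq_abs] at hy
    rw [Real.norm_eq_abs, abs_mul, abs_mul, abs_pow, Nat.abs_cast, mul_comm (m + 1 : ℝ),
      mul_assoc]
    refine mul_le_mul_of_nonneg_left ?_ (abs_nonneg _)
    calc (m : ℝ) * |y| ^ (m - 1) ≤ (m + 1) * R ^ (m - 1) := by gcongr; linarith
      _ ≤ (m + 1) * R ^ m :=
        mul_le_mul_of_nonneg_left (pow_le_pow_right₀ hR (m.sub_le 1)) (by positivity)
  have hderiv := hasDerivAt_tsum_of_isPreconnected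
    (summable_succ_mul_abs_besselCoeff_mul_pow a ha R) Metric.isOpen_ball
    (convex_ball (0 : ℝ) R).isPreconnected
    (fun m y _ => (hasDerivAt_pow m y).const_mul (besselCoeff a m)) hbound
    (Metric.mem_ball_self (by linarith)) (summable_besselCoeff_mul_pow a ha 0) hxR
  suffices h : ∑' m : ℕ, besselCoeff a m * (m * x ^ (m - 1)) = -besselSeries (a + 1) x from
    h ▸ hderiv
  have hs : Summable fun m : ℕ => besselCoeff a m * (m * x ^ (m - 1)) :=
    .of_norm_bounded (summable_succ_mul_abs_besselCoeff_mul_pow a ha R) (hbound · x hxR)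
  rw [hs.tsum_eq_zero_add, besselSeries, ← tsum_neg]
  simp only [Nat.cast_zero, zero_mul, mul_zero, zero_add, Nat.add_sub_cancel, Nat.cast_succ,
    ← mul_assoc, besselCoeff_succ_mul, neg_mul]

lemma besselSeries_zero (a : ℝ) : besselSeries a 0 = (Gamma (a + 1))⁻¹ := by
  rw [besselSeries, tsum_eq_single 0 fun m hm => by simp [zero_pow hm]]
  simp [besselCoeff]

lemma besselSeries_recurrence (a : ℝ) (ha : -1 < a) (x : ℝ) :
    besselSeries a x = (a + 1) * besselSeries (a + 1) x - x * besselSeries (a + 2) x := by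
  have hs : ∀ b, -1 < b → Summable fun m : ℕ => besselCoeff b (m + 1) * x ^ (m + 1) :=
    fun b hb => (summable_nat_add_iff 1).mpr (summable_besselCoeff_mul_pow b hb x)
  rw [besselSeries, besselSeries, besselSeries,
    (summable_besselCoeff_mul_pow a ha x).tsum_eq_zero_add,
    (summable_besselCoeff_mul_pow (a + 1) (by linarith) x).tsum_eq_zero_add,
    mul_add, add_sub_assoc, ← tsum_mul_left, ← tsum_mul_left, ← Summable.tsum_sub]
  · congr 1
    · rw [besselCoeff_eq_mul_besselCoeff_add_one a 0]
      push_cast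
      ring
    · exact tsum_congr fun m => by rw [besselCoeff_recurrence]; ring
  · exact (hs (a + 1) (by linarith)).mul_left _
  · exact (summable_besselCoeff_mul_pow (a + 2) (by linarith) x).mul_left _

lemma besselJ_eq_rpow_mul_besselSeries (a : ℝ) {r : ℝ} (hr : 0 < r) :
    besselJ a r = (r / 2) ^ a * besselSeries a ((r / 2) ^ 2) := by
  rw [besselJ, besselSeries, ← tsum_mul_left]
  congr 1 with m
  rw [rpow_add (by positivity), show (2 * m : ℝ) = ((2 * m : ℕ) : ℝ) by push_cast; ring,
    rpow_natCast, pow_mul, besselCoeff]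
  ring

lemma lt_of_hasDerivAt_nonneg_of_eventually_pos {f f' : ℝ → ℝ} {a b : ℝ} (hab : a < b)
    (hc : ContinuousOn f (Icc a b)) (hd : ∀ t ∈ Ioo a b, HasDerivAt f (f' t) t)
    (hnn : ∀ t ∈ Ioo a b, 0 ≤ f' t) (hpos : ∀ᶠ t in 𝓝[>] a, 0 < f' t) : f a < f b := by
  obtain ⟨u, hau, hu⟩ := mem_nhdsGT_iff_exists_Ioo_subset.mp hpos
  set c := min u b
  have hac : a < c := lt_min hau hab
  have hcb : c ≤ b := min_le_right u b
  have hIoo : Ioo a c ⊆ Ioo a b := Ioo_subset_Ioo_right hcb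
  have hstrict : StrictMonoOn f (Icc a c) :=
    strictMonoOn_of_hasDerivWithinAt_pos (convex_Icc a c) (hc.mono (Icc_subset_Icc_right hcb))
      (fun t ht => by
        rw [interior_Icc] at ht ⊢
        exact (hd t (hIoo ht)).hasDerivWithinAt)
      (fun t ht => by
        rw [interior_Icc] at ht
        exact hu (Ioo_subset_Ioo_right (min_le_left u b) ht))
  have hmono : MonotoneOn f (Icc a b) :=
    monotoneOn_of_hasDerivWithinAt_nonneg (convex_Icc a b) hc
      (fun t ht => by
        rw [interior_Icc] at ht ⊢
        exact (hd t ht).hasDerivWithinAt)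
      (fun t ht => by
        rw [interior_Icc] at ht
        exact hnn t ht)
  calc f a < f c := hstrict (left_mem_Icc.mpr hac.le) (right_mem_Icc.mpr hac.le) hac
    _ ≤ f b := hmono ⟨hac.le, hcb⟩ (right_mem_Icc.mpr hab.le) hcb

def besselTuranForm (a t : ℝ) : ℝ :=
  besselSeries a t ^ 2 - (a + 1) * besselSeries a t * besselSeries (a + 1) t +
    t * besselSeries (a + 1) t ^ 2

lemma hasDerivAt_rpow_mul_besselTuranForm (a : ℝ) (ha : -1 < a) {t : ℝ} (ht : 0 < t) :
    HasDerivAt (fun s => s ^ (a + 1) * besselTuranForm a s)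
      (t ^ (a + 1) * besselSeries (a + 1) t ^ 2) t := by
  have hg := hasDerivAt_besselSeries a ha t
  have hG := hasDerivAt_besselSeries (a + 1) (by linarith) t
  have hP := ((hg.fun_pow 2).fun_sub ((hg.const_mul (a + 1)).fun_mul hG)).fun_add
    ((hasDerivAt_id' t).fun_mul (hG.fun_pow 2))
  have hK := (hasDerivAt_rpow_const (p := a + 1) (Or.inl ht.ne')).fun_mul hP
  refine HasDerivAt.congr_deriv (f := fun s => s ^ (a + 1) * besselTuranForm a s) hK ?_
  have hrec := besselSeries_recurrence a ha t
  rw [show a + 1 + 1 = a + 2 by ring, add_sub_cancel_right,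
    show t ^ (a + 1) = t ^ a * t by rw [rpow_add ht, rpow_one]]
  linear_combination
    (t ^ a * ((a + 1) * besselSeries a t - 2 * t * besselSeries (a + 1) t)) * hrec

lemma continuous_besselSeries (a : ℝ) (ha : -1 < a) : Continuous (besselSeries a) :=
  continuous_iff_continuousAt.mpr fun t => (hasDerivAt_besselSeries a ha t).continuousAt

lemma besselTuranForm_pos (a : ℝ) (ha : -1 < a) {x : ℝ} (hx : 0 < x) :
    0 < besselTuranForm a x := by
  have hcont : ContinuousOn (fun s => s ^ (a + 1) * besselTuranForm a s) (Icc 0 x) := by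
    have := continuous_besselSeries a ha
    have := continuous_besselSeries (a + 1) (by linarith)
    unfold besselTuranForm
    exact (continuous_rpow_const (by linarith)).continuousOn.mul (by fun_prop)
  have hnear : ∀ᶠ t in 𝓝[>] 0, 0 < t ^ (a + 1) * besselSeries (a + 1) t ^ 2 := by
    have hG0 : 0 < besselSeries (a + 1) 0 := by
      rw [besselSeries_zero]
      exact inv_pos.mpr (Gamma_pos_of_pos (by linarith))
    filter_upwards [self_mem_nhdsWithin, nhdsWithin_le_nhds
      ((continuous_besselSeries (a + 1) (by linarith)).continuousAt.eventually
        (lt_mem_nhds hG0))] with t ht hGt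
    exact mul_pos (rpow_pos_of_pos ht _) (pow_pos hGt 2)
  have hK := lt_of_hasDerivAt_nonneg_of_eventually_pos hx hcont
    (fun t ht => hasDerivAt_rpow_mul_besselTuranForm a ha ht.1)
    (fun t ht => mul_nonneg (rpow_nonneg ht.1.le _) (sq_nonneg _)) hnear
  rw [zero_rpow (by linarith), zero_mul] at hK
  exact pos_of_mul_pos_right hK (rpow_pos_of_pos hx _).le

lemma besselSeries_mul_lt_sq (k : ℝ) (hk : -1 < k) {x : ℝ} (hx : 0 < x) :
    (k + 2) * (besselSeries k x * besselSeries (k + 2) x) <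
      (k + 1) * besselSeries (k + 1) x ^ 2 := by
  have hP := besselTuranForm_pos (k + 1) (by linarith) hx
  rw [besselTuranForm, show k + 1 + 1 = k + 2 by ring] at hP
  rw [besselSeries_recurrence k hk x]
  nlinarith [mul_pos (show 0 < k + 1 by linarith) hP,
    mul_nonneg hx.le (sq_nonneg (besselSeries (k + 2) x))]

lemma besselJ_ratio_eventuallyEq (a : ℝ) {r : ℝ} (hr : 0 < r) :
    (fun s => s * besselJ a s / besselJ (a + 1) s) =ᶠ[𝓝 r]
      fun s => 2 * besselSeries a ((s / 2) ^ 2) / besselSeries (a + 1) ((s / 2) ^ 2) := by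
  filter_upwards [lt_mem_nhds hr] with s hs
  have hs2 : (s / 2) ^ a ≠ 0 := (rpow_pos_of_pos (by positivity) a).ne'
  rw [besselJ_eq_rpow_mul_besselSeries a hs, besselJ_eq_rpow_mul_besselSeries (a + 1) hs,
    rpow_add (by positivity), rpow_one]
  field_simp

lemma hasDerivAt_besselSeries_ratio (a : ℝ) (ha : -1 < a) {r : ℝ}
    (h : besselSeries (a + 1) ((r / 2) ^ 2) ≠ 0) :
    HasDerivAt (fun s => 2 * besselSeries a ((s / 2) ^ 2) / besselSeries (a + 1) ((s / 2) ^ 2))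
      (r * (besselSeries a ((r / 2) ^ 2) * besselSeries (a + 2) ((r / 2) ^ 2) -
        besselSeries (a + 1) ((r / 2) ^ 2) ^ 2) / besselSeries (a + 1) ((r / 2) ^ 2) ^ 2) r := by
  have hx : HasDerivAt (fun s : ℝ => (s / 2) ^ 2) (r / 2) r :=
    (((hasDerivAt_id' r).div_const 2).fun_pow 2).congr_deriv (by norm_num; ring)
  have hf := (hasDerivAt_besselSeries a ha _).comp r hx
  have hg := (hasDerivAt_besselSeries (a + 1) (by linarith) _).comp r hx
  rw [show a + 1 + 1 = a + 2 by ring] at hg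
  refine HasDerivAt.congr_deriv
    (f := fun s => 2 * besselSeries a ((s / 2) ^ 2) / besselSeries (a + 1) ((s / 2) ^ 2))
    ((hf.const_mul 2).fun_div hg h) ?_
  simp only [Function.comp_apply]
  field_simp
  ring

end

/-- The derivative of `F_k(r) = r J_k(r)/J_{k+1}(r)` satisfies `F_k'(r) < -r/(k+2)`. -/
theorem deriv_besselJ_ratio_lt (k : ℝ) (hk : -1 < k) (r : ℝ) (hr : 0 < r)
    (h : besselJ (k + 1) r ≠ 0) :
    deriv (fun s => s * besselJ k s / besselJ (k + 1) s) r < -r / (k + 2) := by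
  set x := (r / 2) ^ 2
  have hx : 0 < x := by positivity
  have hf : besselSeries (k + 1) x ≠ 0 := by
    intro h0
    exact h (by rw [besselJ_eq_rpow_mul_besselSeries _ hr, h0, mul_zero])
  rw [(besselJ_ratio_eventuallyEq k hr).deriv_eq, (hasDerivAt_besselSeries_ratio k hk hf).deriv,
    div_lt_div_iff₀ (by positivity) (by linarith)]
  nlinarith [mul_lt_mul_of_pos_left (besselSeries_mul_lt_sq k hk hx) hr]
end

section
/- Fix a real k > −1 and r > 0 with J_{k+1}(r) ≠ 0 and r² ≠ 4(k+2)(k+3). Then J_{k+4}(r) = 0 if and only if r·J_k(r)/J_{k+1}(r) = 2(k+1) − 2(k+3)·r²/(4(k+2)(k+3) − r²). -/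
/-!
Comparing coefficients of the series gives the three-term recurrence
`J_{k+2}(r) = 2(k+1)/r · J_{k+1}(r) - J_k(r)`: the `m`-th term of `r J_{k+2}` equals
`2(k+1)` times the `(m+1)`-st term of `J_{k+1}` minus `r` times that of `J_k`, and the
`0`-th terms match separately. Applying it three times gives
`r³ J_{k+4} = D (2(k+1) J_{k+1} - r J_k) - 2(k+3) r² J_{k+1}` with `D = 4(k+2)(k+3) - r²`,
so for `r, D, J_{k+1} ≠ 0` the vanishing of `J_{k+4}` is the stated identity divided by `D J_{k+1}`.
-/

open Real

noncomputable def besselJTerm (k r : ℝ) (m : ℕ) : ℝ :=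
  ((-1 : ℝ) ^ m / (m.factorial * Real.Gamma (m + k + 1))) * (r / 2) ^ ((2 * m : ℝ) + k)

lemma besselJ_eq_tsum (k r : ℝ) : besselJ k r = ∑' m, besselJTerm k r m := rfl

section
variable {k r : ℝ}

lemma besselJTerm_eq (hr : 0 < r) (m : ℕ) :
    besselJTerm k r m =
      (-1) ^ m * (r / 2) ^ (2 * m) * (r / 2) ^ k / (m.factorial * Gamma (m + k + 1)) := by
  rw [besselJTerm, rpow_add (by positivity), ← Nat.cast_ofNat, ← Nat.cast_mul, rpow_natCast]
  ring

lemma besselJTerm_succ (hr : 0 < r) {m : ℕ} (hm : 0 < (m : ℝ) + k + 1) :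
    besselJTerm k r (m + 1) =
      -besselJTerm k r m * ((r / 2) ^ 2 / ((m + 1) * (m + k + 1))) := by
  have hΓ := (Gamma_pos_of_pos hm).ne'
  simp only [besselJTerm_eq hr, Nat.factorial_succ]
  push_cast
  rw [show (m : ℝ) + 1 + k + 1 = (m + k + 1) + 1 by ring, Gamma_add_one hm.ne']
  field_simp
  ring

lemma summable_besselJTerm (k : ℝ) (hr : 0 < r) : Summable (besselJTerm k r) := by
  refine summable_of_ratio_norm_eventually_le (r := 1 / 2) (by norm_num) ?_
  filter_upwards [Filter.eventually_ge_atTop ⌈-k⌉₊, Filter.eventually_ge_atTop ⌈r ^ 2 / 2⌉₊]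
    with m hmk hmr
  have hmk' : 1 ≤ (m : ℝ) + k + 1 := by linarith [Nat.ceil_le.mp hmk]
  have hr' : r ^ 2 / 2 ≤ m := Nat.ceil_le.mp hmr
  rw [besselJTerm_succ hr (by linarith), norm_mul, norm_neg, mul_comm (1 / 2 : ℝ)]
  gcongr
  rw [norm_of_nonneg (by positivity), div_le_iff₀ (by positivity)]
  nlinarith

lemma mul_besselJTerm_zero (hk : -1 < k) (hr : 0 < r) :
    r * besselJTerm k r 0 = 2 * (k + 1) * besselJTerm (k + 1) r 0 := by
  have hk' : 0 < k + 1 := by linarith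
  have hΓ := (Gamma_pos_of_pos hk').ne'
  simp only [besselJTerm_eq hr, Nat.cast_zero, zero_add, Gamma_add_one hk'.ne',
    rpow_add_one (by positivity : r / 2 ≠ 0)]
  field_simp

lemma mul_besselJTerm_add_two (hk : -1 < k) (hr : 0 < r) (m : ℕ) :
    r * besselJTerm (k + 2) r m =
      2 * (k + 1) * besselJTerm (k + 1) r (m + 1) - r * besselJTerm k r (m + 1) := by
  have hm : 0 < (m : ℝ) + k + 1 := by linarith [m.cast_nonneg (α := ℝ)]
  have hΓ := (Gamma_pos_of_pos hm).ne'
  have h1 : (m : ℝ) + 1 + k + 1 = (m + k + 1) + 1 := by ring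
  have h2 : (m : ℝ) + (k + 2) + 1 = (m + k + 1) + 1 + 1 := by ring
  have h3 : (m : ℝ) + 1 + (k + 1) + 1 = (m + k + 1) + 1 + 1 := by ring
  simp only [besselJTerm_eq hr, Nat.factorial_succ]
  push_cast
  rw [h1, h2, h3, Gamma_add_one (by positivity), Gamma_add_one hm.ne',
    rpow_add_one (by positivity), rpow_add (by positivity), rpow_two]
  field_simp
  ring

lemma besselJ_add_two (hk : -1 < k) (hr : 0 < r) :
    besselJ (k + 2) r = 2 * (k + 1) / r * besselJ (k + 1) r - besselJ k r := by
  have hJ (k : ℝ) : besselJ k r = besselJTerm k r 0 + ∑' m, besselJTerm k r (m + 1) := by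
    rw [besselJ_eq_tsum, (summable_besselJTerm k hr).tsum_eq_zero_add]
  have hJ₂ : r * besselJ (k + 2) r =
      ∑' m, (2 * (k + 1) * besselJTerm (k + 1) r (m + 1) - r * besselJTerm k r (m + 1)) := by
    rw [besselJ_eq_tsum, ← tsum_mul_left]
    exact tsum_congr (mul_besselJTerm_add_two hk hr)
  rw [Summable.tsum_sub, tsum_mul_left, tsum_mul_left] at hJ₂
  · rw [eq_sub_iff_add_eq, div_mul_eq_mul_div, eq_div_iff hr.ne', hJ k, hJ (k + 1)]
    linear_combination hJ₂ + mul_besselJTerm_zero hk hr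
  all_goals exact ((summable_nat_add_iff 1).mpr (summable_besselJTerm _ hr)).mul_left _

lemma pow_three_mul_besselJ_add_four (hk : -1 < k) (hr : 0 < r) :
    r ^ 3 * besselJ (k + 4) r =
      (4 * (k + 2) * (k + 3) - r ^ 2) * (2 * (k + 1) * besselJ (k + 1) r - r * besselJ k r) -
        2 * (k + 3) * r ^ 2 * besselJ (k + 1) r := by
  have h₂ := besselJ_add_two hk hr
  have h₃ := besselJ_add_two (k := k + 1) (by linarith) hr
  have h₄ := besselJ_add_two (k := k + 2) (by linarith) hr
  rw [show k + 1 + 2 = k + 3 by ring, show k + 1 + 1 = k + 2 by ring] at h₃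
  rw [show k + 2 + 2 = k + 4 by ring, show k + 2 + 1 = k + 3 by ring] at h₄
  rw [h₄, h₃, h₂]
  field_simp
  ring

end

/-- `J_{k+4}(r) = 0` iff `F_k(r) = 2(k+1) - 2(k+3)r²/(4(k+2)(k+3) - r²)`. -/
theorem besselJ_add_four_zero_iff (k : ℝ) (hk : -1 < k) (r : ℝ) (hr : 0 < r)
    (h : besselJ (k + 1) r ≠ 0) (h4 : r ^ 2 ≠ 4 * (k + 2) * (k + 3)) :
    besselJ (k + 4) r = 0 ↔
      r * besselJ k r / besselJ (k + 1) r =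
        2 * (k + 1) - 2 * (k + 3) * r ^ 2 / (4 * (k + 2) * (k + 3) - r ^ 2) := by
  have hD : 4 * (k + 2) * (k + 3) - r ^ 2 ≠ 0 := sub_ne_zero.mpr h4.symm
  rw [← mul_eq_zero_iff_left (pow_ne_zero 3 hr.ne'), pow_three_mul_besselJ_add_four hk hr,
    div_eq_iff h, sub_eq_zero]
  field_simp
  constructor <;> intro h' <;> linear_combination -h'
end
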